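/- For every concurrent game structure G with safe set F ⊆ S and every ε > 0, there exist an integer k > 0 and a k-uniform player-1 selector ξ such that the memoryless strategy ξ̄ is ε-optimal for Safe(F), i.e., for all states s, inf_{σ₂} Pr_s^{ξ̄,σ₂}(Safe(F)) ≥ ⟨1⟩val(Safe(F))(s) − ε. -/

import Mathlib

open scoped Classical

/-- A (two-player) concurrent game structure: a finite state space `S`, a finite
set `M` of moves, move assignments `Γ₁ Γ₂ : S → Finset M`, and a probabilistic
transition function `δ`. -/
structure CGame (S : Type) (M : Type) where
  Γ₁ : S → Finset M
  Γ₂ : S → Finset M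
  δ : S → M → M → S → ℝ

namespace CGame

variable {S M : Type} [Fintype S] [DecidableEq S] [Fintype M] [DecidableEq M]

/-- Well-formedness of a concurrent game structure: move sets are nonempty and
`δ s a b` is a probability distribution over states. -/
def IsGame (G : CGame S M) : Prop :=
  (∀ s, (G.Γ₁ s).Nonempty) ∧ (∀ s, (G.Γ₂ s).Nonempty) ∧
    (∀ s a b t, 0 ≤ G.δ s a b t) ∧ (∀ s a b, (∑ t, G.δ s a b t) = 1)

/-- `x : M → ℝ` is a probability distribution supported on `A`. -/
def IsDistOn (A : Finset M) (x : M → ℝ) : Prop :=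
  (∀ a, 0 ≤ x a) ∧ (∀ a, x a ≠ 0 → a ∈ A) ∧ (∑ a, x a) = 1

/-- A selector for player 1. -/
def IsSel1 (G : CGame S M) (ξ : S → M → ℝ) : Prop := ∀ s, IsDistOn (G.Γ₁ s) (ξ s)

/-- A selector for player 2. -/
def IsSel2 (G : CGame S M) (ξ : S → M → ℝ) : Prop := ∀ s, IsDistOn (G.Γ₂ s) (ξ s)

/-- A strategy for player 1: maps a history (past states `w` and current state `s`)
to a distribution over the moves available at `s`. -/
def IsStrat1 (G : CGame S M) (σ : List S → S → M → ℝ) : Prop :=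
  ∀ w s, IsDistOn (G.Γ₁ s) (σ w s)

/-- A strategy for player 2. -/
def IsStrat2 (G : CGame S M) (σ : List S → S → M → ℝ) : Prop :=
  ∀ w s, IsDistOn (G.Γ₂ s) (σ w s)

/-- The memoryless strategy induced by a selector. -/
def ml (ξ : S → M → ℝ) : List S → S → M → ℝ := fun _ s => ξ s

/-- The pure (Dirac) distribution on a move `b`. -/
def pureDist (b : M) : M → ℝ := fun b' => if b' = b then 1 else 0

/-- The player-1 selector choosing all available moves uniformly at random. -/
noncomputable def uniformSel (G : CGame S M) : S → M → ℝ :=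
  fun s a => if a ∈ G.Γ₁ s then (1 : ℝ) / (G.Γ₁ s).card else 0

/-- Probability of reaching `T` within `n` steps, starting from history `w`
and current state `s`, under strategies `σ₁, σ₂`. -/
noncomputable def reachW (G : CGame S M) (σ₁ σ₂ : List S → S → M → ℝ) (T : Set S) :
    ℕ → List S → S → ℝ
  | 0, _, s => if s ∈ T then 1 else 0
  | n + 1, w, s =>
      if s ∈ T then 1
      else ∑ a : M, ∑ b : M, ∑ t : S,
        σ₁ w s a * σ₂ w s b * G.δ s a b t * reachW G σ₁ σ₂ T n (w ++ [s]) t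

/-- Probability of staying in `F` for `n` steps, starting from history `w`
and current state `s`, under strategies `σ₁, σ₂`. -/
noncomputable def safeW (G : CGame S M) (σ₁ σ₂ : List S → S → M → ℝ) (F : Set S) :
    ℕ → List S → S → ℝ
  | 0, _, s => if s ∈ F then 1 else 0
  | n + 1, w, s =>
      if s ∈ F then
        ∑ a : M, ∑ b : M, ∑ t : S,
          σ₁ w s a * σ₂ w s b * G.δ s a b t * safeW G σ₁ σ₂ F n (w ++ [s]) t
      else 0

/-- `Pr_s^{σ₁,σ₂}(Reach T)`: probability of eventually reaching `T` from `s`. -/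
noncomputable def prReach (G : CGame S M) (σ₁ σ₂ : List S → S → M → ℝ) (T : Set S)
    (s : S) : ℝ :=
  ⨆ n : ℕ, reachW G σ₁ σ₂ T n [] s

/-- `Pr_s^{σ₁,σ₂}(Safe F)`: probability that the play stays in `F` forever. -/
noncomputable def prSafe (G : CGame S M) (σ₁ σ₂ : List S → S → M → ℝ) (F : Set S)
    (s : S) : ℝ :=
  ⨅ n : ℕ, safeW G σ₁ σ₂ F n [] s

/-- `⟨1⟩val^{σ₁}(Reach T)(s) = inf_{σ₂} Pr_s^{σ₁,σ₂}(Reach T)`. -/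
noncomputable def valReachUnder (G : CGame S M) (σ₁ : List S → S → M → ℝ) (T : Set S)
    (s : S) : ℝ :=
  ⨅ σ₂ : {σ // IsStrat2 G σ}, prReach G σ₁ σ₂.1 T s

/-- `⟨1⟩val(Reach T)(s) = sup_{σ₁} inf_{σ₂} Pr_s^{σ₁,σ₂}(Reach T)`. -/
noncomputable def valReach (G : CGame S M) (T : Set S) (s : S) : ℝ :=
  ⨆ σ₁ : {σ // IsStrat1 G σ}, valReachUnder G σ₁.1 T s

/-- `⟨1⟩val^{σ₁}(Safe F)(s) = inf_{σ₂} Pr_s^{σ₁,σ₂}(Safe F)`. -/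
noncomputable def valSafeUnder (G : CGame S M) (σ₁ : List S → S → M → ℝ) (F : Set S)
    (s : S) : ℝ :=
  ⨅ σ₂ : {σ // IsStrat2 G σ}, prSafe G σ₁ σ₂.1 F s

/-- `⟨1⟩val(Safe F)(s) = sup_{σ₁} inf_{σ₂} Pr_s^{σ₁,σ₂}(Safe F)`. -/
noncomputable def valSafe (G : CGame S M) (F : Set S) (s : S) : ℝ :=
  ⨆ σ₁ : {σ // IsStrat1 G σ}, valSafeUnder G σ₁.1 F s

/-- `W₂ = {s | ⟨1⟩val(Reach T)(s) = 0}`. -/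
noncomputable def W2 (G : CGame S M) (T : Set S) : Set S := {s | valReach G T s = 0}

/-- `W₁ = {s | ⟨1⟩val(Safe F)(s) = 1}`. -/
noncomputable def W1 (G : CGame S M) (F : Set S) : Set S := {s | valSafe G F s = 1}

/-- A state is absorbing if for all moves the successor is the state itself. -/
def Absorbing (G : CGame S M) (s : S) : Prop := ∀ a b, G.δ s a b s = 1

/-- A player-1 strategy is proper if against every player-2 strategy, from every
state the set `T ∪ W₂` is reached with probability 1. -/
noncomputable def Proper (G : CGame S M) (T : Set S) (σ₁ : List S → S → M → ℝ) : Prop :=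
  ∀ σ₂, IsStrat2 G σ₂ → ∀ s, prReach G σ₁ σ₂ (T ∪ W2 G T) s = 1

/-- `Pre_{ξ₁,ξ₂}(v)(s)`: one-step expectation of `v` at `s` when the players use the
one-state selectors `x, y`. -/
noncomputable def preSS (G : CGame S M) (v : S → ℝ) (s : S) (x y : M → ℝ) : ℝ :=
  ∑ a : M, ∑ b : M, ∑ t : S, v t * G.δ s a b t * x a * y b

/-- `Pre_{1:ξ₁}(v)(s) = inf_{ξ₂} Pre_{ξ₁,ξ₂}(v)(s)`. -/
noncomputable def pre1Sel (G : CGame S M) (v : S → ℝ) (s : S) (x : M → ℝ) : ℝ :=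
  ⨅ y : {y : M → ℝ // IsDistOn (G.Γ₂ s) y}, preSS G v s x y.1

/-- `Pre₁(v)(s) = sup_{ξ₁} inf_{ξ₂} Pre_{ξ₁,ξ₂}(v)(s)`. -/
noncomputable def pre1 (G : CGame S M) (v : S → ℝ) (s : S) : ℝ :=
  ⨆ x : {x : M → ℝ // IsDistOn (G.Γ₁ s) x}, pre1Sel G v s x.1

/-- The value-iteration sequence: `u 0 = [T]`, `u (k+1) = Pre₁ (u k)`. -/
noncomputable def valIter (G : CGame S M) (T : Set S) : ℕ → S → ℝ
  | 0 => fun s => if s ∈ T then 1 else 0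
  | n + 1 => fun s => pre1 G (valIter G T n) s

/-- The entry time `ℓ_k(s) = min {j ≤ k | u_j(s) = u_k(s)}`. -/
noncomputable def entryTime (G : CGame S M) (T : Set S) (k : ℕ) (s : S) : ℕ :=
  sInf {j : ℕ | valIter G T j s = valIter G T k s}

/-- `dest(s,b)` under a player-1 selector `η`: possible successors of `s` when
player 1 plays `η` and player 2 plays `b`. -/
def destSet (G : CGame S M) (η : S → M → ℝ) (s : S) (b : M) : Set S :=
  {t | ∃ a, η s a ≠ 0 ∧ G.δ s a b t ≠ 0}

/-- `OptSel(v,s)`: the set of optimal one-state player-1 selectors for `v` at `s`. -/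
noncomputable def OptSel (G : CGame S M) (v : S → ℝ) (s : S) : Set (M → ℝ) :=
  {x | IsDistOn (G.Γ₁ s) x ∧ pre1Sel G v s x = pre1 G v s}

/-- `CountOpt(v,s,x)`: the set of counter-optimal player-2 moves against `x`. -/
noncomputable def countOpt (G : CGame S M) (v : S → ℝ) (s : S) (x : M → ℝ) : Finset M :=
  (G.Γ₂ s).filter fun b => preSS G v s x (pureDist b) = pre1 G v s

/-- The support of a one-state selector, as a `Finset`. -/
noncomputable def fsupp (x : M → ℝ) : Finset M := Finset.univ.filter fun a => x a ≠ 0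

/-- `OptSelCount(v,s)`: pairs `(A,B)` such that some optimal selector has support `A`
and counter-optimal action set `B`. -/
noncomputable def optSelCount (G : CGame S M) (v : S → ℝ) (s : S) :
    Set (Finset M × Finset M) :=
  {p | ∃ x ∈ OptSel G v s, fsupp x = p.1 ∧ countOpt G v s x = p.2}

/-- A selector is `k`-uniform if every probability it assigns is of the form `i/j`
with `0 ≤ i ≤ j ≤ k`. -/
def KUniform (k : ℕ) (ξ : S → M → ℝ) : Prop :=
  ∀ s a, ∃ i j : ℕ, i ≤ j ∧ j ≤ k ∧ ξ s a = (i : ℝ) / (j : ℝ)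

end CGame

/-!
Let `v` be the safety value. At a safe state, some one-step selector `x` guarantees `v` against
every pure reply of player 2 (strategy surgery: player 2 answers, then switches to a near-optimal
reply from the successor; and a compactness argument). Conversely, any `u ≤ 1` vanishing off `F`
with `u ≤ Pre_{ξ,b}(u)` on `F` for all `b` is a lower bound for the value of `ξ̄`.

The optimal `x` may be irrational. Replace `v` by `u = v - ε' v (1 - v)`, which lies within `ε` of
`v` and is a strictly convex function of it. By Jensen, `x` guarantees `u` against a reply `b`
strictly, unless every successor reachable under `x` and `b` has the value of the current state,
in which case every selector supported inside the support of `x` guarantees it. Hence a rational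
selector close to `x` with smaller support certifies `u`, and its denominators bound `k`.
-/

open Filter Topology

namespace CGame

variable {S M : Type} [Fintype S] [Fintype M]

section Distributions

variable {A : Finset M} {x : M → ℝ}

lemma IsDistOn.le_one (hx : IsDistOn A x) (a : M) : x a ≤ 1 :=
  hx.2.2 ▸ Finset.single_le_sum (fun a _ => hx.1 a) (Finset.mem_univ a)

lemma IsDistOn.sum_mul_le (hx : IsDistOn A x) {f : M → ℝ} {c : ℝ} (hf : ∀ a ∈ A, f a ≤ c) :
    ∑ a, x a * f a ≤ c :=
  calc ∑ a, x a * f a ≤ ∑ a, x a * c := Finset.sum_le_sum fun a _ => by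
        by_cases h : x a = 0
        · simp [h]
        · exact mul_le_mul_of_nonneg_left (hf a (hx.2.1 a h)) (hx.1 a)
    _ = c := by rw [← Finset.sum_mul, hx.2.2, one_mul]

lemma IsDistOn.le_sum_mul (hx : IsDistOn A x) {f : M → ℝ} {c : ℝ} (hf : ∀ a ∈ A, c ≤ f a) :
    c ≤ ∑ a, x a * f a := by
  simpa using hx.sum_mul_le (f := -f) (c := -c) fun a ha => neg_le_neg (hf a ha)

lemma isDistOn_pureDist {b : M} (hb : b ∈ A) : IsDistOn A (pureDist b) := by
  refine ⟨fun a => ?_, fun a ha => ?_, by simp [pureDist]⟩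
  · unfold pureDist; split_ifs <;> norm_num
  · unfold pureDist at ha; split_ifs at ha with h
    · exact h ▸ hb
    · exact absurd rfl ha

lemma exists_isDistOn (hA : A.Nonempty) : ∃ x, IsDistOn A x :=
  ⟨_, isDistOn_pureDist hA.choose_spec⟩

lemma isCompact_setOf_isDistOn (A : Finset M) : IsCompact {x : M → ℝ | IsDistOn A x} := by
  have : {x : M → ℝ | IsDistOn A x} = stdSimplex ℝ M ∩ ⋂ a ∈ Aᶜ, {x | x a = 0} := by
    ext x
    simp only [IsDistOn, ne_eq, not_imp_comm (a := _ = _), Set.mem_ofPred_eq, stdSimplex,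
      Finset.mem_compl, Set.mem_inter_iff, Set.mem_iInter]
    tauto
  rw [this]
  exact (isCompact_stdSimplex ℝ M).inter_right
    (isClosed_biInter fun a _ => isClosed_eq (continuous_apply a) continuous_const)

noncomputable def rescaleOn {K : Type*} [Field K] (x : M → ℝ) (y : M → K) : M → K :=
  fun a => (if x a = 0 then 0 else y a) / ∑ a', if x a' = 0 then 0 else y a'

lemma ratCast_rescaleOn (r : M → ℚ) :
    (fun a => ((rescaleOn x r a : ℚ) : ℝ)) = rescaleOn x fun a => (r a : ℝ) := by
  funext a
  simp only [rescaleOn]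
  push_cast [apply_ite]
  rfl

lemma rescaleOn_self (hx : ∑ a, x a = 1) : rescaleOn x x = x := by
  have hrestrict (a : M) : (if x a = 0 then 0 else x a) = x a := ite_eq_right_iff.2 Eq.symm
  funext a
  simp only [rescaleOn, hrestrict, hx, div_one]

lemma continuousAt_rescaleOn (hx : ∑ a, x a = 1) : ContinuousAt (rescaleOn x) x := by
  have hcont (a : M) : Continuous fun y : M → ℝ => if x a = 0 then 0 else y a := by
    split_ifs <;> fun_prop
  have hsum : (∑ a, if x a = 0 then 0 else x a) ≠ 0 := by
    simp only [ite_eq_right_iff.2 Eq.symm, hx]; exact one_ne_zero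
  exact continuousAt_pi.2 fun a => (hcont a).continuousAt.div
    (continuous_finsetSum _ fun a _ => hcont a).continuousAt hsum

lemma isDistOn_rescaleOn (hx : IsDistOn A x) {y : M → ℝ} (hy : ∀ a, x a ≠ 0 → 0 < y a) :
    IsDistOn A (rescaleOn x y) := by
  have hrestrict (a : M) : 0 ≤ if x a = 0 then 0 else y a := by
    split_ifs with h
    · exact le_rfl
    · exact (hy a h).le
  obtain ⟨a₀, ha₀⟩ : ∃ a, x a ≠ 0 := by
    by_contra! h
    simpa [h] using hx.2.2
  have hpos : 0 < ∑ a, if x a = 0 then 0 else y a :=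
    Finset.sum_pos' (fun a _ => hrestrict a) ⟨a₀, Finset.mem_univ _, by simpa [ha₀] using hy a₀ ha₀⟩
  refine ⟨fun a => div_nonneg (hrestrict a) hpos.le, fun a ha => hx.2.1 a ?_, ?_⟩
  · rintro h; simp [rescaleOn, h] at ha
  · simp only [rescaleOn, ← Finset.sum_div, div_self hpos.ne']

lemma exists_ratCast_isDistOn_mem (hx : IsDistOn A x) {U : Set (M → ℝ)} (hU : U ∈ 𝓝 x) :
    ∃ q : M → ℚ, IsDistOn A (fun a => (q a : ℝ)) ∧ (∀ a, x a = 0 → q a = 0) ∧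
      (fun a => (q a : ℝ)) ∈ U := by
  have hV : ∀ᶠ y in 𝓝 x, rescaleOn x y ∈ U ∧ ∀ a, x a ≠ 0 → 0 < y a := by
    refine Eventually.and (p := fun y => rescaleOn x y ∈ U)
      ((continuousAt_rescaleOn hx.2.2).preimage_mem_nhds (by rwa [rescaleOn_self hx.2.2]))
      (eventually_all.2 fun a => ?_)
    by_cases h : x a = 0
    · exact Eventually.of_forall fun _ h' => absurd h h'
    · filter_upwards [(continuous_apply a).continuousAt.eventually
        (lt_mem_nhds (lt_of_le_of_ne (hx.1 a) (Ne.symm h)))] with y hy _ using hy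
  obtain ⟨r, hrU, hrpos⟩ := (DenseRange.piMap fun _ => Rat.denseRange_cast).mem_nhds hV
  refine ⟨rescaleOn x r, ?_, fun a ha => by simp [rescaleOn, ha], ?_⟩
  · rw [ratCast_rescaleOn]
    exact isDistOn_rescaleOn hx hrpos
  · rw [ratCast_rescaleOn]
    exact hrU

end Distributions

/-- `preMove G v s x b` is `Pre_{x,b}(v)(s)`: the expected value of `v` after one step from `s`
when player 1 plays the distribution `x` and player 2 the move `b`. -/
noncomputable def preMove (G : CGame S M) (v : S → ℝ) (s : S) (x : M → ℝ) (b : M) : ℝ :=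
  ∑ a, x a * ∑ t, G.δ s a b t * v t

section PreMove

variable {G : CGame S M} {s : S} {x : M → ℝ} {b : M}

lemma preMove_nonneg (hG : G.IsGame) (hx : ∀ a, 0 ≤ x a) {v : S → ℝ} (hv : ∀ t, 0 ≤ v t) :
    0 ≤ preMove G v s x b :=
  Finset.sum_nonneg fun a _ =>
    mul_nonneg (hx a) (Finset.sum_nonneg fun t _ => mul_nonneg (hG.2.2.1 s a b t) (hv t))

lemma preMove_mono (hG : G.IsGame) (hx : ∀ a, 0 ≤ x a) {u v : S → ℝ} (huv : ∀ t, u t ≤ v t) :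
    preMove G u s x b ≤ preMove G v s x b :=
  Finset.sum_le_sum fun a _ => mul_le_mul_of_nonneg_left (Finset.sum_le_sum fun t _ =>
    mul_le_mul_of_nonneg_left (huv t) (hG.2.2.1 s a b t)) (hx a)

lemma preMove_add_const (hG : G.IsGame) (hx : ∑ a, x a = 1) (v : S → ℝ) (c : ℝ) :
    preMove G (fun t => v t + c) s x b = preMove G v s x b + c := by
  simp only [preMove, mul_add, Finset.sum_add_distrib, ← Finset.sum_mul, hG.2.2.2, one_mul, hx]

lemma preMove_sub_const (hG : G.IsGame) (hx : ∑ a, x a = 1) (v : S → ℝ) (c : ℝ) :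
    preMove G (fun t => v t - c) s x b = preMove G v s x b - c := by
  simpa only [sub_eq_add_neg] using preMove_add_const hG hx v (-c)

lemma preMove_const (hG : G.IsGame) (hx : ∑ a, x a = 1) (c : ℝ) :
    preMove G (fun _ => c) s x b = c := by
  simpa [preMove] using preMove_add_const (b := b) (s := s) hG hx 0 c

lemma preMove_linear_comb (α β : ℝ) (u v : S → ℝ) :
    preMove G (fun t => α * u t + β * v t) s x b =
      α * preMove G u s x b + β * preMove G v s x b := by
  simp only [preMove, Finset.mul_sum, ← Finset.sum_add_distrib]
  exact Finset.sum_congr rfl fun a _ => Finset.sum_congr rfl fun t _ => by ring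

lemma preMove_eq_zero_of_forall {v : S → ℝ}
    (hv : ∀ a t, x a ≠ 0 → G.δ s a b t ≠ 0 → v t = 0) : preMove G v s x b = 0 := by
  refine Finset.sum_eq_zero fun a _ => ?_
  by_cases ha : x a = 0
  · simp [ha]
  · refine mul_eq_zero_of_right _ (Finset.sum_eq_zero fun t _ => ?_)
    by_cases ht : G.δ s a b t = 0
    · simp [ht]
    · simp [hv a t ha ht]

lemma forall_of_preMove_eq_zero (hG : G.IsGame) (hx : ∀ a, 0 ≤ x a) {v : S → ℝ}
    (hv : ∀ t, 0 ≤ v t) (h : preMove G v s x b = 0) :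
    ∀ a t, x a ≠ 0 → G.δ s a b t ≠ 0 → v t = 0 := by
  intro a t ha ht
  have hrow := (Finset.sum_eq_zero_iff_of_nonneg fun a _ => mul_nonneg (hx a)
    (Finset.sum_nonneg fun t _ => mul_nonneg (hG.2.2.1 s a b t) (hv t))).1 h a
    (Finset.mem_univ a)
  have hterm := (Finset.sum_eq_zero_iff_of_nonneg fun t _ => mul_nonneg (hG.2.2.1 s a b t)
    (hv t)).1 ((mul_eq_zero.1 hrow).resolve_left ha) t (Finset.mem_univ t)
  exact (mul_eq_zero.1 hterm).resolve_left ht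

lemma continuous_preMove (v : S → ℝ) : Continuous fun x => preMove G v s x b := by
  unfold preMove; fun_prop

end PreMove

section SafeW

variable {G : CGame S M} {F : Set S} {σ₁ σ₂ : List S → S → M → ℝ}

lemma safeW_succ_of_mem {s : S} (hs : s ∈ F) (n : ℕ) (w : List S) :
    safeW G σ₁ σ₂ F (n + 1) w s =
      ∑ b, σ₂ w s b * preMove G (safeW G σ₁ σ₂ F n (w ++ [s])) s (σ₁ w s) b := by
  rw [safeW, if_pos hs, Finset.sum_comm]
  simp only [preMove, Finset.mul_sum]
  exact Finset.sum_congr rfl fun b _ => Finset.sum_congr rfl fun a _ =>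
    Finset.sum_congr rfl fun t _ => by ring

lemma safeW_of_notMem {s : S} (hs : s ∉ F) (n : ℕ) (w : List S) :
    safeW G σ₁ σ₂ F n w s = 0 := by
  cases n <;> simp [safeW, hs]

lemma safeW_congr {τ₁ τ₂ : List S → S → M → ℝ} (n : ℕ) {w v : List S} {s : S}
    (h₁ : σ₁ w s = τ₁ v s ∧ ∀ r u, σ₁ (w ++ s :: r) u = τ₁ (v ++ s :: r) u)
    (h₂ : σ₂ w s = τ₂ v s ∧ ∀ r u, σ₂ (w ++ s :: r) u = τ₂ (v ++ s :: r) u) :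
    safeW G σ₁ σ₂ F n w s = safeW G τ₁ τ₂ F n v s := by
  induction n generalizing w v s with
  | zero => rfl
  | succ n ih =>
    by_cases hs : s ∈ F
    · have hnext (t : S) : safeW G σ₁ σ₂ F n (w ++ [s]) t = safeW G τ₁ τ₂ F n (v ++ [s]) t :=
        ih ⟨h₁.2 [] t, fun r u => by simpa using h₁.2 (t :: r) u⟩
          ⟨h₂.2 [] t, fun r u => by simpa using h₂.2 (t :: r) u⟩
      simp only [safeW_succ_of_mem hs, h₁.1, h₂.1, funext hnext]
    · rw [safeW_of_notMem hs, safeW_of_notMem hs]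

variable (hG : G.IsGame) (h₁ : IsStrat1 G σ₁) (h₂ : IsStrat2 G σ₂)
include hG h₁ h₂

lemma safeW_nonneg (n : ℕ) (w : List S) (s : S) : 0 ≤ safeW G σ₁ σ₂ F n w s := by
  induction n generalizing w s with
  | zero => unfold safeW; split_ifs <;> norm_num
  | succ n ih =>
    by_cases hs : s ∈ F
    · rw [safeW_succ_of_mem hs]
      exact Finset.sum_nonneg fun b _ =>
        mul_nonneg ((h₂ w s).1 b) (preMove_nonneg hG (h₁ w s).1 (ih _))
    · rw [safeW_of_notMem hs]

lemma safeW_le_one (n : ℕ) (w : List S) (s : S) : safeW G σ₁ σ₂ F n w s ≤ 1 := by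
  induction n generalizing w s with
  | zero => unfold safeW; split_ifs <;> norm_num
  | succ n ih =>
    by_cases hs : s ∈ F
    · rw [safeW_succ_of_mem hs]
      exact (h₂ w s).sum_mul_le fun b _ =>
        (preMove_mono hG (h₁ w s).1 (ih _)).trans_eq (preMove_const hG (h₁ w s).2.2 1)
    · rw [safeW_of_notMem hs]; norm_num

lemma safeW_succ_le (n : ℕ) (w : List S) (s : S) :
    safeW G σ₁ σ₂ F (n + 1) w s ≤ safeW G σ₁ σ₂ F n w s := by
  induction n generalizing w s with
  | zero =>
    by_cases hs : s ∈ F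
    · exact (safeW_le_one hG h₁ h₂ 1 w s).trans_eq (if_pos hs).symm
    · rw [safeW_of_notMem hs]
      exact safeW_nonneg hG h₁ h₂ 0 w s
  | succ n ih =>
    by_cases hs : s ∈ F
    · rw [safeW_succ_of_mem hs, safeW_succ_of_mem hs]
      exact Finset.sum_le_sum fun b _ =>
        mul_le_mul_of_nonneg_left (preMove_mono hG (h₁ w s).1 (ih _)) ((h₂ w s).1 b)
    · rw [safeW_of_notMem hs, safeW_of_notMem hs]

lemma antitone_safeW (w : List S) (s : S) : Antitone fun n => safeW G σ₁ σ₂ F n w s :=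
  antitone_nat_of_succ_le fun n => safeW_succ_le hG h₁ h₂ n w s

end SafeW

section Values

variable {G : CGame S M} {F : Set S} {σ₁ σ₂ : List S → S → M → ℝ}

lemma nonempty_isStrat1 (hG : G.IsGame) : Nonempty {σ // IsStrat1 G σ} := by
  choose x hx using fun s => exists_isDistOn (hG.1 s)
  exact ⟨⟨fun _ s => x s, fun _ s => hx s⟩⟩

lemma nonempty_isStrat2 (hG : G.IsGame) : Nonempty {σ // IsStrat2 G σ} := by
  choose x hx using fun s => exists_isDistOn (hG.2.1 s)
  exact ⟨⟨fun _ s => x s, fun _ s => hx s⟩⟩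

lemma prSafe_nonneg (hG : G.IsGame) (h₁ : IsStrat1 G σ₁) (h₂ : IsStrat2 G σ₂) (s : S) :
    0 ≤ prSafe G σ₁ σ₂ F s :=
  le_ciInf fun n => safeW_nonneg hG h₁ h₂ n [] s

lemma prSafe_le_safeW (hG : G.IsGame) (h₁ : IsStrat1 G σ₁) (h₂ : IsStrat2 G σ₂) (n : ℕ)
    (s : S) : prSafe G σ₁ σ₂ F s ≤ safeW G σ₁ σ₂ F n [] s :=
  ciInf_le ⟨0, Set.forall_mem_range.2 fun m => safeW_nonneg hG h₁ h₂ m [] s⟩ n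

lemma valSafeUnder_le_prSafe (hG : G.IsGame) (h₁ : IsStrat1 G σ₁) (h₂ : IsStrat2 G σ₂)
    (s : S) : valSafeUnder G σ₁ F s ≤ prSafe G σ₁ σ₂ F s :=
  ciInf_le (f := fun σ : {σ // IsStrat2 G σ} => prSafe G σ₁ σ.1 F s)
    ⟨0, Set.forall_mem_range.2 fun σ => prSafe_nonneg hG h₁ σ.2 s⟩ ⟨σ₂, h₂⟩

lemma valSafeUnder_nonneg (hG : G.IsGame) (h₁ : IsStrat1 G σ₁) (s : S) :
    0 ≤ valSafeUnder G σ₁ F s :=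
  have := nonempty_isStrat2 hG
  le_ciInf fun σ => prSafe_nonneg hG h₁ σ.2 s

lemma valSafeUnder_le_one (hG : G.IsGame) (h₁ : IsStrat1 G σ₁) (s : S) :
    valSafeUnder G σ₁ F s ≤ 1 :=
  let ⟨σ₂⟩ := nonempty_isStrat2 hG
  (valSafeUnder_le_prSafe hG h₁ σ₂.2 s).trans
    ((prSafe_le_safeW hG h₁ σ₂.2 0 s).trans (safeW_le_one hG h₁ σ₂.2 0 [] s))

lemma valSafeUnder_le_valSafe (hG : G.IsGame) (h₁ : IsStrat1 G σ₁) (s : S) :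
    valSafeUnder G σ₁ F s ≤ valSafe G F s :=
  le_ciSup (f := fun σ : {σ // IsStrat1 G σ} => valSafeUnder G σ.1 F s)
    ⟨1, Set.forall_mem_range.2 fun σ => valSafeUnder_le_one hG σ.2 s⟩ ⟨σ₁, h₁⟩

lemma valSafe_le (hG : G.IsGame) {s : S} {r : ℝ}
    (h : ∀ σ₁, IsStrat1 G σ₁ → valSafeUnder G σ₁ F s ≤ r) : valSafe G F s ≤ r :=
  have := nonempty_isStrat1 hG
  ciSup_le fun σ => h σ.1 σ.2

lemma valSafe_nonneg (hG : G.IsGame) (s : S) : 0 ≤ valSafe G F s :=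
  let ⟨σ₁⟩ := nonempty_isStrat1 hG
  (valSafeUnder_nonneg hG σ₁.2 s).trans (valSafeUnder_le_valSafe hG σ₁.2 s)

lemma valSafe_le_one (hG : G.IsGame) (s : S) : valSafe G F s ≤ 1 :=
  valSafe_le hG fun _ h₁ => valSafeUnder_le_one hG h₁ s

lemma valSafe_of_notMem (hG : G.IsGame) {s : S} (hs : s ∉ F) : valSafe G F s = 0 := by
  obtain ⟨σ₂⟩ := nonempty_isStrat2 hG
  refine le_antisymm (valSafe_le hG fun σ₁ h₁ => ?_) (valSafe_nonneg hG s)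
  calc valSafeUnder G σ₁ F s ≤ safeW G σ₁ σ₂.1 F 0 [] s :=
        (valSafeUnder_le_prSafe hG h₁ σ₂.2 s).trans (prSafe_le_safeW hG h₁ σ₂.2 0 s)
    _ = 0 := safeW_of_notMem hs 0 []

lemma exists_safeW_lt (hG : G.IsGame) {s : S} {r : ℝ} (h : valSafeUnder G σ₁ F s < r) :
    ∃ σ₂, IsStrat2 G σ₂ ∧ ∃ n, safeW G σ₁ σ₂ F n [] s < r := by
  have := nonempty_isStrat2 hG
  obtain ⟨σ₂, hσ₂⟩ := exists_lt_of_ciInf_lt h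
  exact ⟨σ₂.1, σ₂.2, exists_lt_of_ciInf_lt hσ₂⟩

end Values

section Certificate

variable {G : CGame S M} {F : Set S} {ξ : S → M → ℝ} {v : S → ℝ}

lemma le_safeW_ml (hG : G.IsGame) (hξ : IsSel1 G ξ) {σ₂ : List S → S → M → ℝ}
    (h₂ : IsStrat2 G σ₂) (hv₁ : ∀ t, v t ≤ 1) (hvF : ∀ t ∉ F, v t ≤ 0)
    (hsub : ∀ s ∈ F, ∀ b ∈ G.Γ₂ s, v s ≤ preMove G v s (ξ s) b) (n : ℕ) (w : List S) (s : S) :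
    v s ≤ safeW G (ml ξ) σ₂ F n w s := by
  induction n generalizing w s with
  | zero =>
    unfold safeW
    split_ifs with hs
    · exact hv₁ s
    · exact hvF s hs
  | succ n ih =>
    by_cases hs : s ∈ F
    · rw [safeW_succ_of_mem hs]
      exact (h₂ w s).le_sum_mul fun b hb =>
        (hsub s hs b hb).trans (preMove_mono hG (hξ s).1 (ih _))
    · rw [safeW_of_notMem hs]
      exact hvF s hs

lemma le_valSafeUnder_ml (hG : G.IsGame) (hξ : IsSel1 G ξ) (hv₁ : ∀ t, v t ≤ 1)
    (hvF : ∀ t ∉ F, v t ≤ 0) (hsub : ∀ s ∈ F, ∀ b ∈ G.Γ₂ s, v s ≤ preMove G v s (ξ s) b)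
    (s : S) : v s ≤ valSafeUnder G (ml ξ) F s :=
  have := nonempty_isStrat2 hG
  le_ciInf fun σ₂ => le_ciInf fun n => le_safeW_ml hG hξ σ₂.2 hv₁ hvF hsub n [] s

end Certificate

section Bellman

variable {G : CGame S M} {F : Set S} {s : S}

lemma valSafeUnder_le_preMove_add (hG : G.IsGame) (hs : s ∈ F) {σ₁ : List S → S → M → ℝ}
    (h₁ : IsStrat1 G σ₁) {b : M} (hb : b ∈ G.Γ₂ s) {η : ℝ} (hη : 0 < η) :
    valSafeUnder G σ₁ F s ≤ preMove G (valSafe G F) s (σ₁ [] s) b + η := by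
  let σ₁' : List S → S → M → ℝ := fun w => σ₁ (s :: w)
  have h₁' : IsStrat1 G σ₁' := fun w => h₁ (s :: w)
  have hreply (t : S) : ∃ τ, IsStrat2 G τ ∧ ∃ n, safeW G σ₁' τ F n [] t < valSafe G F t + η :=
    exists_safeW_lt hG ((valSafeUnder_le_valSafe hG h₁' t).trans_lt (lt_add_of_pos_right _ hη))
  choose τ hτ N hN using hreply
  -- Player 2 answers `b` at `s`, then plays `τ t` from the first successor `t` on.
  let σ₂ : List S → S → M → ℝ := fun w u => match w with
    | [] => if u = s then pureDist b else τ u [] u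
    | _ :: w' => τ (w'.headD u) w' u
  have h₂ : IsStrat2 G σ₂ := by
    rintro (_ | ⟨_, w'⟩) u
    · by_cases h : u = s
      · simpa [σ₂, h] using isDistOn_pureDist hb
      · simpa [σ₂, h] using hτ u [] u
    · exact hτ _ w' u
  have hcont (t : S) : safeW G σ₁ σ₂ F (Finset.univ.sup N) [s] t ≤ valSafe G F t + η :=
    calc safeW G σ₁ σ₂ F (Finset.univ.sup N) [s] t
        = safeW G σ₁' (τ t) F (Finset.univ.sup N) [] t :=
          safeW_congr _ ⟨rfl, fun _ _ => rfl⟩ ⟨rfl, fun _ _ => rfl⟩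
      _ ≤ safeW G σ₁' (τ t) F (N t) [] t :=
          antitone_safeW hG h₁' (hτ t) [] t (Finset.le_sup (Finset.mem_univ t))
      _ ≤ valSafe G F t + η := (hN t).le
  calc valSafeUnder G σ₁ F s ≤ safeW G σ₁ σ₂ F (Finset.univ.sup N + 1) [] s :=
        (valSafeUnder_le_prSafe hG h₁ h₂ s).trans (prSafe_le_safeW hG h₁ h₂ _ s)
    _ = preMove G (safeW G σ₁ σ₂ F (Finset.univ.sup N) [s]) s (σ₁ [] s) b := by
        simp [safeW_succ_of_mem hs, σ₂, pureDist]
    _ ≤ preMove G (fun t => valSafe G F t + η) s (σ₁ [] s) b := preMove_mono hG (h₁ [] s).1 hcont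
    _ = preMove G (valSafe G F) s (σ₁ [] s) b + η := preMove_add_const hG (h₁ [] s).2.2 _ η

/-- The optimal selector maximizes the worst-case one-step value over the compact set of
distributions. -/
lemma exists_isDistOn_forall_valSafe_le_preMove (hG : G.IsGame) (hs : s ∈ F) :
    ∃ x, IsDistOn (G.Γ₁ s) x ∧ ∀ b ∈ G.Γ₂ s, valSafe G F s ≤ preMove G (valSafe G F) s x b := by
  let φ : (M → ℝ) → ℝ := fun x => (G.Γ₂ s).inf' (hG.2.1 s) fun b => preMove G (valSafe G F) s x b
  have hφ : Continuous φ := Continuous.finset_inf'_apply _ fun b _ => continuous_preMove _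
  obtain ⟨x, hx, hmax⟩ := (isCompact_setOf_isDistOn (G.Γ₁ s)).exists_isMaxOn
    (exists_isDistOn (hG.1 s)) hφ.continuousOn
  refine ⟨x, hx, fun b hb => le_trans ?_ (Finset.inf'_le _ hb)⟩
  refine le_of_forall_pos_le_add fun η hη => valSafe_le hG fun σ₁ h₁ => ?_
  obtain ⟨b, hb, hφb⟩ := Finset.exists_mem_eq_inf' (hG.2.1 s)
    fun b => preMove G (valSafe G F) s (σ₁ [] s) b
  calc valSafeUnder G σ₁ F s ≤ preMove G (valSafe G F) s (σ₁ [] s) b + η :=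
        valSafeUnder_le_preMove_add hG hs h₁ hb hη
    _ = φ (σ₁ [] s) + η := by rw [← hφb]
    _ ≤ φ x + η := by gcongr; exact hmax (h₁ [] s)

end Bellman

section Tilt

/-- For `0 < ε < 1`, a strictly convex increasing bijection of `[0, 1]` within `ε / 4` of the
identity. -/
def tilt (ε y : ℝ) : ℝ := y - ε * (y * (1 - y))

lemma tilt_sub_tilt (ε y c : ℝ) :
    tilt ε y - tilt ε c = (1 + ε * (2 * c - 1)) * (y - c) + ε * (y - c) ^ 2 := by
  unfold tilt; ring

lemma sub_le_tilt {ε : ℝ} (hε : 0 ≤ ε) (y : ℝ) : y - ε ≤ tilt ε y := by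
  unfold tilt; nlinarith [sq_nonneg (y - 1 / 2)]

lemma tilt_le_self {ε y : ℝ} (hε : 0 ≤ ε) (hy₀ : 0 ≤ y) (hy₁ : y ≤ 1) : tilt ε y ≤ y := by
  unfold tilt; nlinarith [mul_nonneg hε (mul_nonneg hy₀ (sub_nonneg.2 hy₁))]

variable {G : CGame S M} {F : Set S} {s : S} {x : M → ℝ} {b : M} {ε : ℝ}

/-- `tilt_sub_tilt` splits the gain into a drift term, nonnegative by `hcx`, and a variance
term, which vanishes only if every successor reachable under `x` and `b` has value `c`. -/
lemma preMove_tilt_pos_or_forall_eq (hG : G.IsGame) (hε₀ : 0 < ε) (hε₁ : ε < 1)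
    {A : Finset M} (hx : IsDistOn A x) {v : S → ℝ} {c : ℝ} (hc : 0 ≤ c)
    (hcx : c ≤ preMove G v s x b) :
    0 < preMove G (fun t => tilt ε (v t) - tilt ε c) s x b ∨
      ∀ a t, x a ≠ 0 → G.δ s a b t ≠ 0 → v t = c := by
  have hsplit : preMove G (fun t => tilt ε (v t) - tilt ε c) s x b =
      (1 + ε * (2 * c - 1)) * (preMove G v s x b - c) +
        ε * preMove G (fun t => (v t - c) ^ 2) s x b := by
    simp only [tilt_sub_tilt, preMove_linear_comb, preMove_sub_const hG hx.2.2]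
  rcases (preMove_nonneg hG hx.1 fun t => sq_nonneg (v t - c)).lt_or_eq with hvar | hvar
  · left
    rw [hsplit]
    have hslope : 0 < 1 + ε * (2 * c - 1) := by nlinarith
    nlinarith [mul_nonneg hslope.le (sub_nonneg.2 hcx), mul_pos hε₀ hvar]
  · right
    intro a t ha ht
    simpa [sub_eq_zero] using
      forall_of_preMove_eq_zero hG hx.1 (fun t => sq_nonneg (v t - c)) hvar.symm a t ha ht

lemma exists_ratCast_forall_tilt_le_preMove (hG : G.IsGame) (hε₀ : 0 < ε) (hε₁ : ε < 1)
    (s : S) :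
    ∃ q : M → ℚ, IsDistOn (G.Γ₁ s) (fun a => (q a : ℝ)) ∧ (s ∈ F → ∀ b ∈ G.Γ₂ s,
      tilt ε (valSafe G F s) ≤ preMove G (fun t => tilt ε (valSafe G F t)) s (fun a => q a) b) := by
  by_cases hs : s ∈ F
  swap
  · obtain ⟨x, hx⟩ := exists_isDistOn (hG.1 s)
    obtain ⟨q, hq, -⟩ := exists_ratCast_isDistOn_mem hx univ_mem
    exact ⟨q, hq, fun h => absurd h hs⟩
  obtain ⟨x, hx, hopt⟩ := exists_isDistOn_forall_valSafe_le_preMove hG hs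
  let gain (b : M) (y : M → ℝ) : ℝ :=
    preMove G (fun t => tilt ε (valSafe G F t) - tilt ε (valSafe G F s)) s y b
  have hU : ∀ᶠ y in 𝓝 x, ∀ b ∈ G.Γ₂ s, 0 < gain b x → 0 < gain b y := by
    refine (Finset.eventually_all _).2 fun b _ => ?_
    by_cases h : 0 < gain b x
    · filter_upwards [(continuous_preMove _).continuousAt.eventually (lt_mem_nhds h)]
        with y hy _ using hy
    · exact Eventually.of_forall fun _ h' => absurd h' h
  obtain ⟨q, hq, hqx, hqU⟩ := exists_ratCast_isDistOn_mem hx hU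
  refine ⟨q, hq, fun _ b hb => ?_⟩
  rw [← sub_nonneg, ← preMove_sub_const hG hq.2.2]
  rcases preMove_tilt_pos_or_forall_eq hG hε₀ hε₁ hx (valSafe_nonneg hG s) (hopt b hb) with
    hpos | hflat
  · exact (hqU b hb hpos).le
  · refine (preMove_eq_zero_of_forall fun a t ha ht => ?_).ge
    have hxa : x a ≠ 0 := fun h => ha (by simp [hqx a h])
    simp [hflat a t hxa ht]

end Tilt

lemma exists_kUniform_ratCast {q : S → M → ℚ} (hq₀ : ∀ s a, 0 ≤ q s a) (hq₁ : ∀ s a, q s a ≤ 1) :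
    ∃ k, 0 < k ∧ KUniform k fun s a => (q s a : ℝ) := by
  refine ⟨Finset.univ.sup (fun p : S × M => (q p.1 p.2).den) + 1, Nat.succ_pos _,
    fun s a => ⟨(q s a).num.toNat, (q s a).den, ?_, ?_, ?_⟩⟩
  all_goals beta_reduce
  · exact Int.toNat_le.2 (Rat.num_le_denom_iff.2 (hq₁ s a))
  · exact (Finset.le_sup (f := fun p : S × M => (q p.1 p.2).den) (Finset.mem_univ (s, a))).trans
      (Nat.le_succ _)
  · rw [Rat.cast_def, ← Int.cast_natCast (q s a).num.toNat,
      Int.toNat_of_nonneg (Rat.num_nonneg.2 (hq₀ s a))]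

end CGame

theorem k_uniform_eps_optimal_safe_general
    {S M : Type} [Fintype S] [Fintype M]
    (G : CGame S M) (hG : G.IsGame) (F : Set S) (ε : ℝ) (hε : 0 < ε) :
    ∃ k : ℕ, 0 < k ∧ ∃ ξ : S → M → ℝ, CGame.IsSel1 G ξ ∧ CGame.KUniform k ξ ∧
      ∀ s : S, CGame.valSafe G F s - ε ≤ CGame.valSafeUnder G (CGame.ml ξ) F s := by
  open CGame in
  obtain ⟨ε', hε'₀, hε'₁, hε'ε⟩ : ∃ ε', 0 < ε' ∧ ε' < 1 ∧ ε' ≤ ε :=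
    ⟨min ε (1 / 2), lt_min hε one_half_pos, (min_le_right _ _).trans_lt one_half_lt_one,
      min_le_left _ _⟩
  choose q hq hsub using exists_ratCast_forall_tilt_le_preMove (F := F) hG hε'₀ hε'₁
  obtain ⟨k, hk, hkq⟩ := exists_kUniform_ratCast (fun s a => Rat.cast_nonneg.1 ((hq s).1 a))
    (fun s a => by exact_mod_cast (hq s).le_one a)
  refine ⟨k, hk, fun s a => q s a, hq, hkq, fun s => ?_⟩
  calc valSafe G F s - ε ≤ tilt ε' (valSafe G F s) :=
        (sub_le_sub_left hε'ε _).trans (sub_le_tilt hε'₀.le _)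
    _ ≤ valSafeUnder G (ml fun s a => q s a) F s :=
        le_valSafeUnder_ml hG hq
          (fun t => (tilt_le_self hε'₀.le (valSafe_nonneg hG t) (valSafe_le_one hG t)).trans
            (valSafe_le_one hG t))
          (fun t ht => by simp [valSafe_of_notMem hG ht, tilt]) hsub s

/-- **k-uniform memoryless ε-optimal strategies for concurrent safety games.**
For every concurrent game structure `G` with safe set `F` and every `ε > 0`,
there exist `k > 0` and a `k`-uniform player-1 selector `ξ` whose induced
memoryless strategy is ε-optimal for `Safe F`: for every state `s`,
`inf_{σ₂} Pr_s^{ml ξ, σ₂}(Safe F) ≥ ⟨1⟩val(Safe F)(s) − ε`. -/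
theorem k_uniform_eps_optimal_safe
    {S M : Type} [Fintype S] [DecidableEq S] [Fintype M] [DecidableEq M]
    (G : CGame S M) (hG : G.IsGame) (F : Set S) (ε : ℝ) (hε : 0 < ε) :
    ∃ k : ℕ, 0 < k ∧ ∃ ξ : S → M → ℝ, CGame.IsSel1 G ξ ∧ CGame.KUniform k ξ ∧
      ∀ s : S, CGame.valSafe G F s - ε ≤ CGame.valSafeUnder G (CGame.ml ξ) F s :=
  k_uniform_eps_optimal_safe_general G hG F ε hε
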